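/- Consider a scheduling game with rank-based utilities on two identical machines with n = 2ℓ unit jobs (ℓ ≥ 1) and arbitrary priority lists π₁, π₂. Let s be a profile that assigns exactly ℓ jobs to each machine and is stable against cost-reducing deviations, and let j_{1ℓ}, j_{2ℓ} be the last jobs on M₁ and M₂ respectively. Then s is a pure Nash equilibrium if and only if π₁(j_{1ℓ}) < π₁(j_{2ℓ}) and π₂(j_{2ℓ}) < π₂(j_{1ℓ}). -/

import Mathlib

open Finset
open scoped Classical

noncomputable section

variable {J M : Type*} [Fintype J]

/-- Completion time of job `j` in profile `s`: the total processing time of the jobs on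
`j`'s machine that do not come after `j` in that machine's priority list, divided by the speed. -/
def Ctime (p : J → ℝ) (r : M → ℝ) (π : M → J → ℕ) (s : J → M) (j : J) : ℝ :=
  (∑ j' ∈ univ.filter (fun j' => s j' = s j ∧ π (s j) j' ≤ π (s j) j), p j') / r (s j)

/-- Rank of job `j` in profile `s`. -/
def rankOf (p : J → ℝ) (r : M → ℝ) (π : M → J → ℕ) (s : J → M) (j : J) : ℝ :=
  ((univ.filter (fun j' => Ctime p r π s j' < Ctime p r π s j)).card : ℝ) +
    (((univ.filter (fun j' => Ctime p r π s j' = Ctime p r π s j)).card : ℝ) + 1) / 2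

/-- The unilateral deviation of job `j` to machine `i` is beneficial. -/
def Beneficial (p : J → ℝ) (r : M → ℝ) (π : M → J → ℕ) (s : J → M) (j : J) (i : M) : Prop :=
  rankOf p r π (Function.update s j i) j < rankOf p r π s j ∨
    (rankOf p r π (Function.update s j i) j = rankOf p r π s j ∧
      Ctime p r π (Function.update s j i) j < Ctime p r π s j)

/-- Pure Nash equilibrium: no job has a beneficial deviation. -/
def IsNE (p : J → ℝ) (r : M → ℝ) (π : M → J → ℕ) (s : J → M) : Prop :=
  ∀ j i, ¬ Beneficial p r π s j i

/-- `s` is stable against cost-reducing deviations. -/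
def StableCost (p : J → ℝ) (r : M → ℝ) (π : M → J → ℕ) (s : J → M) : Prop :=
  ∀ j i, ¬ Ctime p r π (Function.update s j i) j < Ctime p r π s j

/-- Job `j` is assigned to machine `i` and is processed last on it. -/
def IsLastOn (π : M → J → ℕ) (s : J → M) (i : M) (j : J) : Prop :=
  s j = i ∧ ∀ j', j' ≠ j → s j' = i → π i j' < π i j

/-!
With unit jobs on identical machines the completion time of a job is its position on its machine,
and the positions on a machine with load `L` are exactly `1, …, L`. Hence the rank of a job at
position `t` depends only on `t` and the loads. In the balanced profile it is `2t - 1/2`. After a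
move to the other machine (loads `ℓ + 1` and `ℓ - 1`) to a position `t' ≥ t` (cost stability) it is
`2t' - 1/2` for `t' < ℓ`, `2ℓ - 1` for `t' = ℓ` and `2ℓ` for `t' = ℓ + 1`. So a move pays off
exactly when a last job (`t = ℓ`) lands at position `ℓ`, i.e. ahead of the last job of the other
machine.
-/

def position (π : M → J → ℕ) (s : J → M) (j : J) : ℕ :=
  #{j' | s j' = s j ∧ π (s j) j' ≤ π (s j) j}

def load (s : J → M) (i : M) : ℕ :=
  #{j | s j = i}

section

variable {π : M → J → ℕ} {s : J → M}

theorem Ctime_unit (j : J) :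
    Ctime (fun _ => 1) (fun _ => 1) π s j = position π s j := by
  simp [Ctime, position]

theorem one_le_position (j : J) : 1 ≤ position π s j :=
  card_pos.mpr ⟨j, by simp⟩

theorem position_le_load (j : J) : position π s j ≤ load s (s j) :=
  card_le_card fun j' hj' => by simp_all

theorem position_lt_position {j j' : J} (hs : s j' = s j) (hlt : π (s j) j' < π (s j) j) :
    position π s j' < position π s j := by
  refine card_lt_card ⟨fun x hx => ?_, fun hsub => ?_⟩
  · simp only [mem_filter, mem_univ, true_and, hs] at hx ⊢
    exact ⟨hx.1, hx.2.trans hlt.le⟩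
  · have := hsub (show j ∈ _ by simp)
    simp only [mem_filter, mem_univ, true_and, hs] at this
    exact absurd this (not_le.mpr hlt)

theorem position_injOn {i : M} (hπ : Function.Injective (π i)) :
    Set.InjOn (position π s) {j | s j = i} := by
  intro a ha b hb hab
  simp only [Set.mem_ofPred_eq] at ha hb
  by_contra hne
  rcases (hπ.ne hne).lt_or_gt with h | h
  · exact (position_lt_position (ha.trans hb.symm) (hb ▸ h)).ne hab
  · exact (position_lt_position (hb.trans ha.symm) (ha ▸ h)).ne' hab

theorem image_position {i : M} (hπ : Function.Injective (π i)) :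
    image (position π s) {j | s j = i} = Icc 1 (load s i) := by
  refine eq_of_subset_of_card_le (fun x hx => ?_) ?_
  · obtain ⟨j, hj, rfl⟩ := mem_image.mp hx
    exact mem_Icc.mpr ⟨one_le_position j, (mem_filter.mp hj).2 ▸ position_le_load j⟩
  · rw [Nat.card_Icc, card_image_of_injOn (by simpa using position_injOn hπ)]
    rfl

theorem card_filter_position {i : M} (hπ : Function.Injective (π i)) (P : ℕ → Prop)
    [DecidablePred P] :
    #{j | P (position π s j) ∧ s j = i} = #{x ∈ Icc 1 (load s i) | P x} := by
  rw [← image_position hπ, filter_image, card_image_of_injOn, filter_filter]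
  · simp only [and_comm]
  · exact (position_injOn hπ).mono fun j hj => by simp_all

theorem card_position_lt [Fintype M] (hπ : ∀ i, Function.Injective (π i)) (t : ℕ) :
    #{j | position π s j < t} = ∑ i, min (load s i) (t - 1) := by
  rw [card_eq_sum_card_fiberwise (f := s) (t := univ) (by simp)]
  refine sum_congr rfl fun i _ => ?_
  rw [filter_filter, card_filter_position (hπ i) (· < t)]
  have : {x ∈ Icc 1 (load s i) | x < t} = Icc 1 (min (load s i) (t - 1)) := by
    ext x; simp only [mem_filter, mem_Icc]; omega
  rw [this, Nat.card_Icc, Nat.add_sub_cancel]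

theorem card_position_eq [Fintype M] (hπ : ∀ i, Function.Injective (π i)) {t : ℕ} (ht : 1 ≤ t) :
    #{j | position π s j = t} = ∑ i, if t ≤ load s i then 1 else 0 := by
  rw [card_eq_sum_card_fiberwise (f := s) (t := univ) (by simp)]
  refine sum_congr rfl fun i _ => ?_
  rw [filter_filter, card_filter_position (hπ i) (· = t), filter_eq']
  split_ifs <;> simp_all

theorem two_mul_rankOf_unit [Fintype M] (hπ : ∀ i, Function.Injective (π i)) (j : J) :
    2 * rankOf (fun _ => 1) (fun _ => 1) π s j =
      ((∑ i, (2 * min (load s i) (position π s j - 1) +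
        if position π s j ≤ load s i then 1 else 0) + 1 : ℕ) : ℝ) := by
  simp only [rankOf, Ctime_unit, Nat.cast_lt, Nat.cast_inj]
  rw [card_position_lt hπ, card_position_eq hπ (one_le_position j), sum_add_distrib, ← mul_sum]
  push_cast
  ring

theorem load_update_of_ne {j : J} {i : M} (h : s j ≠ i) :
    load (Function.update s j i) i = load s i + 1 := by
  have : univ.filter (Function.update s j i · = i) = insert j (univ.filter (s · = i)) := by
    ext x
    rcases eq_or_ne x j with rfl | hx <;> simp [Function.update_of_ne, *]
  rw [load, this, card_insert_of_notMem (by simpa using h), load]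

theorem load_update_self_apply {j : J} {i : M} (h : s j ≠ i) :
    load (Function.update s j i) (s j) = load s (s j) - 1 := by
  have : univ.filter (Function.update s j i · = s j) = (univ.filter (s · = s j)).erase j := by
    ext x
    rcases eq_or_ne x j with rfl | hx <;> simp [Function.update_of_ne, Ne.symm h, *]
  rw [load, this, card_erase_of_mem (by simp), load]

theorem StableCost.position_le (h : StableCost (fun _ => 1) (fun _ => 1) π s) (j : J) (i : M) :
    position π s j ≤ position π (Function.update s j i) j := by
  simpa [Ctime_unit] using h j i

theorem not_beneficial_self (p : J → ℝ) (r : M → ℝ) (j : J) : ¬ Beneficial p r π s j (s j) := by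
  simp [Beneficial]

theorem IsLastOn.position_eq {i : M} {j : J} (h : IsLastOn π s i j) :
    position π s j = load s i := by
  rw [position, load, h.1]
  congr 1
  ext j'
  rcases eq_or_ne j' j with rfl | hj'
  · simp [h.1]
  · simpa using fun hj'i => (h.2 j' hj' hj'i).le

theorem IsLastOn.eq_of_position_eq {i : M} {j jl : J} (hπ : Function.Injective (π i))
    (h : IsLastOn π s i jl) (hj : s j = i) (hpos : position π s j = load s i) : j = jl :=
  position_injOn hπ hj h.1 (hpos.trans h.position_eq.symm)

end

theorem Fin.sum_univ_two_of_ne {β : Type*} [AddCommMonoid β] {i i' : Fin 2} (h : i ≠ i')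
    (f : Fin 2 → β) : ∑ k, f k = f i + f i' := by
  fin_cases i <;> fin_cases i' <;> simp_all [Fin.sum_univ_two, add_comm]

theorem beneficial_iff_position_eq {ℓ : ℕ} {π : Fin 2 → J → ℕ} {s : J → Fin 2}
    (hπ : ∀ i, Function.Injective (π i)) (hbal : ∀ i, load s i = ℓ)
    (hstable : StableCost (fun _ => 1) (fun _ => 1) π s) {j : J} {i : Fin 2} (hi : s j ≠ i) :
    Beneficial (fun _ => 1) (fun _ => 1) π s j i ↔
      position π s j = ℓ ∧ position π (Function.update s j i) j = ℓ := by
  have hle := hstable.position_le j i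
  have hrank : Beneficial (fun _ => 1) (fun _ => 1) π s j i ↔
      2 * rankOf (fun _ => 1) (fun _ => 1) π (Function.update s j i) j <
        2 * rankOf (fun _ => 1) (fun _ => 1) π s j := by
    simp only [Beneficial, Ctime_unit, Nat.cast_lt, not_lt.mpr hle, and_false, or_false]
    constructor <;> intro <;> linarith
  have hpos := position_le_load (π := π) (s := s) j
  have hpos' := position_le_load (π := π) (s := Function.update s j i) j
  rw [Function.update_self, load_update_of_ne hi] at hpos'
  rw [hrank, two_mul_rankOf_unit hπ, two_mul_rankOf_unit hπ, Nat.cast_lt,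
    Fin.sum_univ_two_of_ne hi, Fin.sum_univ_two_of_ne hi, load_update_of_ne hi,
    load_update_self_apply hi]
  simp only [hbal] at hpos hpos' ⊢
  have := one_le_position (π := π) (s := s) j
  split_ifs <;> omega

theorem IsLastOn.beneficial_iff {ℓ : ℕ} {π : Fin 2 → J → ℕ} {s : J → Fin 2}
    (hπ : ∀ i, Function.Injective (π i)) (hbal : ∀ i, load s i = ℓ)
    (hstable : StableCost (fun _ => 1) (fun _ => 1) π s) {a b : Fin 2} {ja jb : J}
    (ha : IsLastOn π s a ja) (hb : IsLastOn π s b jb) (hab : a ≠ b) :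
    Beneficial (fun _ => 1) (fun _ => 1) π s jb a ↔ π a jb < π a ja := by
  have hjb : s jb ≠ a := hb.1 ▸ hab.symm
  have hle := hstable.position_le jb a
  rw [beneficial_iff_position_eq hπ hbal hstable hjb, hb.position_eq, hbal, eq_self, true_and]
  rw [hb.position_eq, hbal] at hle
  constructor
  · intro hpos
    by_contra hlt
    have hne : ja ≠ jb := fun h => hab (ha.1.symm.trans (h ▸ hb.1))
    have hlt' := lt_of_le_of_ne (not_lt.mp hlt) ((hπ a).ne hne)
    have hlast : IsLastOn π (Function.update s jb a) a jb := by
      refine ⟨Function.update_self .., fun j' hj' hs' => ?_⟩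
      rw [Function.update_of_ne hj'] at hs'
      rcases eq_or_ne j' ja with rfl | hja
      · exact hlt'
      · exact (ha.2 j' hja hs').trans hlt'
    rw [hlast.position_eq, load_update_of_ne hjb, hbal] at hpos
    omega
  · intro hlt
    have hja : ja ≠ jb := fun h => (h ▸ hlt).false
    have hja_on : Function.update s jb a ja = a := by rw [Function.update_of_ne hja, ha.1]
    have hpos_lt := position_lt_position (π := π) (hja_on.symm ▸ Function.update_self ..)
      (hja_on.symm ▸ hlt)
    have hpos_le := position_le_load (π := π) (s := Function.update s jb a) ja
    rw [hja_on, load_update_of_ne hjb, hbal] at hpos_le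
    omega

theorem balanced_NE_iff_general (ℓ : ℕ) (n : ℕ)
    (π : Fin 2 → Fin n → ℕ) (hπ : ∀ i, Function.Injective (π i))
    (s : Fin n → Fin 2)
    (hbal : ∀ i, (univ.filter (fun j => s j = i)).card = ℓ)
    (hstable : StableCost (fun _ => (1:ℝ)) (fun _ => (1:ℝ)) π s)
    (j1 j2 : Fin n) (h1 : IsLastOn π s 0 j1) (h2 : IsLastOn π s 1 j2) :
    IsNE (fun _ => (1:ℝ)) (fun _ => (1:ℝ)) π s ↔
      (π 0 j1 < π 0 j2 ∧ π 1 j2 < π 1 j1) := by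
  have hload : ∀ i, load s i = ℓ := fun i => by unfold load; convert hbal i
  have hne : j1 ≠ j2 := fun h => zero_ne_one (h1.1.symm.trans (h ▸ h2.1))
  have move_to_0 := h1.beneficial_iff hπ hload hstable h2 zero_ne_one
  have move_to_1 := h2.beneficial_iff hπ hload hstable h1 one_ne_zero
  constructor
  · intro hNE
    exact ⟨lt_of_le_of_ne (not_lt.mp fun h => hNE j2 0 (move_to_0.mpr h)) ((hπ 0).ne hne),
      lt_of_le_of_ne (not_lt.mp fun h => hNE j1 1 (move_to_1.mpr h)) ((hπ 1).ne hne.symm)⟩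
  · rintro ⟨hp0, hp1⟩ j i hB
    obtain rfl | hi := eq_or_ne i (s j)
    · exact not_beneficial_self _ _ j hB
    have hlast := ((beneficial_iff_position_eq hπ hload hstable hi.symm).mp hB).1
    obtain ⟨hsj, rfl⟩ | ⟨hsj, rfl⟩ : s j = 0 ∧ i = 1 ∨ s j = 1 ∧ i = 0 := by omega
    · obtain rfl := h1.eq_of_position_eq (hπ 0) hsj (hlast.trans (hload 0).symm)
      exact (move_to_1.mp hB).asymm hp1
    · obtain rfl := h2.eq_of_position_eq (hπ 1) hsj (hlast.trans (hload 1).symm)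
      exact (move_to_0.mp hB).asymm hp0

/-- A balanced cost-stable profile of `2ℓ` unit jobs on two identical machines is a NE
iff each of the two last jobs is prioritized on its own machine over the other one. -/
theorem balanced_NE_iff (ℓ : ℕ) (hℓ : 1 ≤ ℓ) (n : ℕ) (hn : n = 2 * ℓ)
    (π : Fin 2 → Fin n → ℕ) (hπ : ∀ i, Function.Injective (π i))
    (s : Fin n → Fin 2)
    (hbal : ∀ i, (univ.filter (fun j => s j = i)).card = ℓ)
    (hstable : StableCost (fun _ => (1:ℝ)) (fun _ => (1:ℝ)) π s)
    (j1 j2 : Fin n) (h1 : IsLastOn π s 0 j1) (h2 : IsLastOn π s 1 j2) :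
    IsNE (fun _ => (1:ℝ)) (fun _ => (1:ℝ)) π s ↔
      (π 0 j1 < π 0 j2 ∧ π 1 j2 < π 1 j1) :=
  balanced_NE_iff_general ℓ n π hπ s hbal hstable j1 j2 h1 h2
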